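/- Let G be a finite simple graph that is {diamond, K2 ∪ 2K1}-free and such that both G and its complement Ḡ are connected. If U is a homogeneous set of G that contains two non-adjacent vertices, then G is bipartite. -/

import Mathlib

open SimpleGraph

/-- `G` is `H`-free: no induced subgraph of `G` is isomorphic to `H`
(an induced copy is a graph embedding). -/
def InducedFree {α β : Type*} (H : SimpleGraph β) (G : SimpleGraph α) : Prop :=
  ¬ Nonempty (H ↪g G)

/-- The diamond: `K4` minus the edge `2-3`. -/
def diamond : SimpleGraph (Fin 4) :=
  fromEdgeSet {s(0,1), s(0,2), s(0,3), s(1,2), s(1,3)}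

/-- `K2 ∪ 2K1`: one edge `0-1` together with two isolated vertices `2,3`
(the complement of the diamond). -/
def K2u2K1 : SimpleGraph (Fin 4) := fromEdgeSet {s(0,1)}

/-- `U` is a homogeneous set of `G`: `2 ≤ |U| ≤ |V| − 1` and every vertex
outside `U` is adjacent to all of `U` or to none of `U`. -/
def IsHomogeneousSet {V : Type*} [Fintype V] (G : SimpleGraph V) (U : Set V) : Prop :=
  2 ≤ U.ncard ∧ U.ncard ≤ Fintype.card V - 1 ∧
    ∀ v ∉ U, (∀ u ∈ U, G.Adj v u) ∨ (∀ u ∈ U, ¬ G.Adj v u)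

/-- `G` is bipartite: its vertex set can be partitioned into two independent sets. -/
def IsBipartite {V : Type*} (G : SimpleGraph V) : Prop :=
  ∃ A : Set V, ∀ u v : V, G.Adj u v → ((u ∈ A ∧ v ∉ A) ∨ (u ∉ A ∧ v ∈ A))


/-! Pick distinct non-adjacent `x, y ∈ U`. Since `G` and `Gᶜ` are connected, some vertex `a` is
adjacent to all of `U` and some vertex `b ∉ U` to none of it. Diamond-freeness makes
"equal or adjacent" transitive on the neighbourhood of `a`, so `G[U]` is a disjoint union of
cliques; an edge `uv` inside `U` would then leave a vertex `w ∈ U` adjacent to neither, and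
`uv, w, b` would induce `K2 ∪ 2K1`. So `U` is independent, and by homogeneity every vertex is a
common neighbour or a common non-neighbour of `x` and `y`. Both of these sets are independent,
again by diamond- and `K2 ∪ 2K1`-freeness, which gives the bipartition. -/

lemma InducedFree.not_forall_adj_iff {α β : Type*} {H : SimpleGraph β} {G : SimpleGraph α}
    (hH : InducedFree H G) {f : β → α} (hf : f.Injective) :
    ¬ ∀ i j, G.Adj (f i) (f j) ↔ H.Adj i j :=
  fun hadj => hH ⟨⟨⟨f, hf⟩, hadj _ _⟩⟩

section

variable {V : Type*} {G : SimpleGraph V}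

lemma isIndepSet_commonNeighbors_of_diamondFree (hD : InducedFree diamond G) {x y : V}
    (hne : x ≠ y) (hxy : ¬ G.Adj x y) : G.IsIndepSet (G.commonNeighbors x y) := by
  rintro p ⟨hxp : G.Adj x p, hyp : G.Adj y p⟩ q ⟨hxq : G.Adj x q, hyq : G.Adj y q⟩ - hpq
  have := hxp.ne; have := hyp.ne; have := hxq.ne; have := hyq.ne; have := hpq.ne
  refine hD.not_forall_adj_iff (f := ![p, q, x, y]) ?_ ?_
  · intro i j
    fin_cases i <;> fin_cases j <;> simp_all [eq_comm]
  · intro i j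
    fin_cases i <;> fin_cases j <;> simp [diamond, adj_comm, *]

lemma isIndepSet_commonNonNeighbors_of_K2u2K1Free (hC : InducedFree K2u2K1 G) {x y : V}
    (hne : x ≠ y) (hxy : ¬ G.Adj x y) : G.IsIndepSet {v | ¬ G.Adj x v ∧ ¬ G.Adj y v} := by
  rintro p ⟨hxp, hyp⟩ q ⟨hxq, hyq⟩ - hpq
  have := G.ne_of_adj_of_not_adj hpq hxq; have := G.ne_of_adj_of_not_adj hpq hyq
  have := G.ne_of_adj_of_not_adj hpq.symm hxp; have := G.ne_of_adj_of_not_adj hpq.symm hyp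
  have := hpq.ne
  refine hC.not_forall_adj_iff (f := ![p, q, x, y]) ?_ ?_
  · intro i j
    fin_cases i <;> fin_cases j <;> simp_all [eq_comm]
  · intro i j
    fin_cases i <;> fin_cases j <;> simp [K2u2K1, adj_comm, *]

lemma eq_or_adj_trans_of_diamondFree (hD : InducedFree diamond G) {a p q r : V}
    (hp : G.Adj a p) (hq : G.Adj a q) (hr : G.Adj a r)
    (hpq : p = q ∨ G.Adj p q) (hqr : q = r ∨ G.Adj q r) : p = r ∨ G.Adj p r := by
  obtain rfl | hpq := hpq
  · exact hqr
  obtain rfl | hqr := hqr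
  · exact .inr hpq
  by_contra! h
  exact isIndepSet_commonNeighbors_of_diamondFree hD h.1 h.2 ⟨hp.symm, hr.symm⟩
    ⟨hpq, hqr.symm⟩ hq.ne hq

lemma isIndepSet_of_forall_adj_of_forall_not_adj (hD : InducedFree diamond G)
    (hC : InducedFree K2u2K1 G) {U : Set V} {a b x y : V} (ha : ∀ u ∈ U, G.Adj a u)
    (hbU : b ∉ U) (hb : ∀ u ∈ U, ¬ G.Adj b u) (hx : x ∈ U) (hy : y ∈ U) (hne : x ≠ y)
    (hxy : ¬ G.Adj x y) : G.IsIndepSet U := by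
  have htrans {p q r : V} (hp : p ∈ U) (hq : q ∈ U) (hr : r ∈ U) :
      p = q ∨ G.Adj p q → q = r ∨ G.Adj q r → p = r ∨ G.Adj p r :=
    eq_or_adj_trans_of_diamondFree hD (ha p hp) (ha q hq) (ha r hr)
  rintro u hu v hv - huv
  -- `x` and `y` lie in different cliques of `G[U]`, so one of them is outside the clique of `u`.
  obtain ⟨w, hw, hwu⟩ : ∃ w ∈ U, ¬ (w = u ∨ G.Adj w u) := by
    by_contra! h
    exact not_or.2 ⟨hne, hxy⟩ <|
      htrans hx hu hy (h x hx) ((h y hy).imp Eq.symm Adj.symm)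
  have hwv : ¬ (w = v ∨ G.Adj w v) := fun h => hwu (htrans hw hv hu h (.inr huv.symm))
  exact isIndepSet_commonNonNeighbors_of_K2u2K1Free hC (ne_of_mem_of_not_mem hw hbU)
    (fun h => hb w hw h.symm) ⟨(not_or.1 hwu).2, hb u hu⟩ ⟨(not_or.1 hwv).2, hb v hv⟩ huv.ne huv

lemma isBipartite_of_isIndepSet {A B : Set V} (hA : G.IsIndepSet A) (hB : G.IsIndepSet B)
    (hAB : ∀ v, v ∈ A ∨ v ∈ B) : _root_.IsBipartite G := by
  refine ⟨A, fun u v huv => ?_⟩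
  by_cases hu : u ∈ A
  · exact .inl ⟨hu, fun hv => hA hu hv huv.ne huv⟩
  · exact .inr ⟨hu, (hAB v).resolve_right fun hv => hB ((hAB u).resolve_left hu) hv huv.ne huv⟩

namespace IsHomogeneousSet

variable [Fintype V] {U : Set V}

lemma exists_notMem (hU : IsHomogeneousSet G U) : ∃ v, v ∉ U := by
  obtain ⟨htwo, hle, -⟩ := hU
  by_contra! h
  rw [Set.eq_univ_of_forall h, Set.ncard_univ, Nat.card_eq_fintype_card] at htwo hle
  omega

lemma compl (hU : IsHomogeneousSet G U) : IsHomogeneousSet Gᶜ U := by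
  refine ⟨hU.1, hU.2.1, fun v hv => ?_⟩
  simp only [compl_adj]
  rcases hU.2.2 v hv with h | h
  · exact .inr fun u hu h' => h'.2 (h u hu)
  · exact .inl fun u hu => ⟨(ne_of_mem_of_not_mem hu hv).symm, h u hu⟩

lemma exists_forall_adj (hU : IsHomogeneousSet G U) (hG : G.Preconnected) (hne : U.Nonempty) :
    ∃ a, ∀ u ∈ U, G.Adj a u := by
  obtain ⟨x, hx⟩ := hne
  obtain ⟨v, hv⟩ := hU.exists_notMem
  obtain ⟨p⟩ := hG x v
  obtain ⟨d, -, hd₁, hd₂⟩ := p.exists_boundary_dart U hx hv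
  exact ⟨d.snd, (hU.2.2 _ hd₂).resolve_right fun h => h _ hd₁ d.adj.symm⟩

end IsHomogeneousSet

end

theorem diamond_codiamond_free_homogeneous_nonadj {V : Type*} [Fintype V]
    (G : SimpleGraph V) (hconn : G.Connected) (hcoconn : Gᶜ.Connected)
    (hdiamond : InducedFree diamond G) (hcodiamond : InducedFree K2u2K1 G)
    (U : Set V) (hU : IsHomogeneousSet G U)
    (hnonadj : ∃ x ∈ U, ∃ y ∈ U, x ≠ y ∧ ¬ G.Adj x y) :
    _root_.IsBipartite G := by
  obtain ⟨x, hx, y, hy, hne, hxy⟩ := hnonadj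
  obtain ⟨a, ha⟩ := hU.exists_forall_adj hconn.preconnected ⟨x, hx⟩
  obtain ⟨b, hb⟩ := hU.compl.exists_forall_adj hcoconn.preconnected ⟨x, hx⟩
  have hUind : G.IsIndepSet U := isIndepSet_of_forall_adj_of_forall_not_adj hdiamond hcodiamond
    ha (fun h => (hb b h).1 rfl) (fun u hu => (hb u hu).2) hx hy hne hxy
  have hUnonadj {u v : V} (hu : u ∈ U) (hv : v ∈ U) : ¬ G.Adj u v := fun h => hUind hu hv h.ne h
  refine isBipartite_of_isIndepSet (isIndepSet_commonNeighbors_of_diamondFree hdiamond hne hxy)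
    (isIndepSet_commonNonNeighbors_of_K2u2K1Free hcodiamond hne hxy) fun v => ?_
  by_cases hv : v ∈ U
  · exact .inr ⟨hUnonadj hx hv, hUnonadj hy hv⟩
  rcases hU.2.2 v hv with h | h
  · exact .inl ⟨(h x hx).symm, (h y hy).symm⟩
  · exact .inr ⟨fun h' => h x hx h'.symm, fun h' => h y hy h'.symm⟩
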